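/- Let f(x,y,t) = 1 + x^l + y^k + ∑_{i>0} c_i t^i x^{m_i} y^{n_i} and g(x,y,t) = a + b x^l + ∑_{i>0} α_i c_i t^i x^{m_i} y^{n_i} with l > 1, k > 0, and a, b, α_1 nonzero pairwise distinct complex numbers with α_1 ≠ b. Let (x_1, y_0) and (x_2, y_0) be roots of the system {1 + x^l + y^k = 0, a + b x^l = 0} with x_1^{m_1} ≠ x_2^{m_1} and x_1, x_2, y_0 ∈ ℂ*. Then the 2×2 determinant det(M_2(p_1), M_3(p_1); M_2(p_2), M_3(p_2)) is nonzero, where M_2, M_3 are the last two 2×2 minors of the Jacobian matrix ((l x^{l-1}, k y^{k-1}, x^{m_1} y^{n_1}), (b l x^{l-1}, 0, α_1 x^{m_1} y^{n_1})) evaluated at p_i = (x_i, y_0). -/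
import Mathlib


/-- transversality determinant. With `p₁ = (x₁, y₀)`, `p₂ = (x₂, y₀)`
roots of the truncated system `{1 + xˡ + yᵏ = 0, a + b·xˡ = 0}` and
`x₁^{m₁} ≠ x₂^{m₁}`, the determinant `M₂(p₁)M₃(p₂) - M₃(p₁)M₂(p₂)` is nonzero,
where `M₂, M₃` are the last two 2×2 minors of the Jacobian
`((l·x^{l-1}, k·y^{k-1}, x^{m₁}y^{n₁}), (b·l·x^{l-1}, 0, α₁·x^{m₁}y^{n₁}))`:
`M₂ x y = l·x^{l-1}·α₁·x^{m₁}y^{n₁} - b·l·x^{l-1}·x^{m₁}y^{n₁}` and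
`M₃ x y = -(b·l·x^{l-1}·k·y^{k-1})`. -/
theorem transversality_determinant_ne_zero
    (l k m₁ n₁ : ℕ) (hl : 1 < l) (hk : 0 < k)
    (a b α₁ : ℂ) (ha : a ≠ 0) (hb : b ≠ 0) (hα : α₁ ≠ 0)
    (hab : a ≠ b) (haα : a ≠ α₁) (hbα : b ≠ α₁)
    (x₁ x₂ y₀ : ℂ) (hx₁ : x₁ ≠ 0) (hx₂ : x₂ ≠ 0) (hy₀ : y₀ ≠ 0)
    (hroot₁ : 1 + x₁ ^ l + y₀ ^ k = 0) (hroot₁' : a + b * x₁ ^ l = 0)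
    (hroot₂ : 1 + x₂ ^ l + y₀ ^ k = 0) (hroot₂' : a + b * x₂ ^ l = 0)
    (hm : x₁ ^ m₁ ≠ x₂ ^ m₁) :
    ((l : ℂ) * x₁ ^ (l - 1) * (α₁ * x₁ ^ m₁ * y₀ ^ n₁)
        - b * (l : ℂ) * x₁ ^ (l - 1) * (x₁ ^ m₁ * y₀ ^ n₁)) *
      (-(b * (l : ℂ) * x₂ ^ (l - 1) * ((k : ℂ) * y₀ ^ (k - 1)))) -
    (-(b * (l : ℂ) * x₁ ^ (l - 1) * ((k : ℂ) * y₀ ^ (k - 1)))) *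
      ((l : ℂ) * x₂ ^ (l - 1) * (α₁ * x₂ ^ m₁ * y₀ ^ n₁)
        - b * (l : ℂ) * x₂ ^ (l - 1) * (x₂ ^ m₁ * y₀ ^ n₁)) ≠ 0 := by
  have key : ((l : ℂ) * x₁ ^ (l - 1) * (α₁ * x₁ ^ m₁ * y₀ ^ n₁)
        - b * (l : ℂ) * x₁ ^ (l - 1) * (x₁ ^ m₁ * y₀ ^ n₁)) *
      (-(b * (l : ℂ) * x₂ ^ (l - 1) * ((k : ℂ) * y₀ ^ (k - 1)))) -
    (-(b * (l : ℂ) * x₁ ^ (l - 1) * ((k : ℂ) * y₀ ^ (k - 1)))) *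
      ((l : ℂ) * x₂ ^ (l - 1) * (α₁ * x₂ ^ m₁ * y₀ ^ n₁)
        - b * (l : ℂ) * x₂ ^ (l - 1) * (x₂ ^ m₁ * y₀ ^ n₁))
      = -(b * (l : ℂ) * (l : ℂ) * (k : ℂ) * x₁ ^ (l - 1) * x₂ ^ (l - 1)
          * y₀ ^ (k - 1) * y₀ ^ n₁ * (α₁ - b) * (x₁ ^ m₁ - x₂ ^ m₁)) := by
    ring
  rw [key]
  have hlc : (l : ℂ) ≠ 0 := Nat.cast_ne_zero.mpr (by omega)
  have hkc : (k : ℂ) ≠ 0 := Nat.cast_ne_zero.mpr (by omega)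
  have hαb : α₁ - b ≠ 0 := sub_ne_zero.mpr (Ne.symm hbα)
  have hsub : x₁ ^ m₁ - x₂ ^ m₁ ≠ 0 := sub_ne_zero.mpr hm
  apply neg_ne_zero.mpr
  refine mul_ne_zero (mul_ne_zero (mul_ne_zero (mul_ne_zero (mul_ne_zero
    (mul_ne_zero (mul_ne_zero (mul_ne_zero (mul_ne_zero hb hlc) hlc) hkc)
    (pow_ne_zero _ hx₁)) (pow_ne_zero _ hx₂)) (pow_ne_zero _ hy₀))
    (pow_ne_zero _ hy₀)) hαb) hsub
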